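/- Let n ≥ 1 be an integer, s₀ > 0, α ∈ (−π/2, π/2), and η′ > 0. Then, as τ → ∞, τ · e^{−τ/(2s₀)} · ∫₀^{η′} r^{(2n+1)/2} · | (r − s₀·conj(z_α))^{−2} · exp( iτ/(r − s₀·conj(z_α)) ) | dr = O( τ^{−(n+1)/2} · τ^{3/4} ), i.e. the left-hand side is O(τ^{(1−2n)/4}) as τ → ∞. -/

import Mathlib

open Real Filter MeasureTheory Asymptotics Nat

/-- `conj(z_α)` where `z_α = -cos α + i(1 + sin α)`. -/
noncomputable def zbar (α : ℝ) : ℂ :=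
  (starRingEnd ℂ) (-(Real.cos α : ℂ) + Complex.I * ((1 + Real.sin α : ℝ) : ℂ))

lemma aux_rpow_exp (m : ℕ) {p : ℝ} (hp0 : 0 ≤ p) (hp : p ≤ m) {x : ℝ} (hx : 0 ≤ x) :
    x ^ p * Real.exp (-x) ≤ (m ! : ℝ) + 1 := by
  have hm1 : (1:ℝ) ≤ (m ! : ℝ) + 1 := by
    have h := m.factorial_pos
    have : (1:ℝ) ≤ (m ! : ℝ) := by exact_mod_cast h
    linarith
  rcases le_or_gt x 1 with h | h
  · have h1 : x ^ p ≤ 1 := Real.rpow_le_one hx h hp0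
    have h2 : Real.exp (-x) ≤ 1 := Real.exp_le_one_iff.mpr (by linarith)
    calc x ^ p * Real.exp (-x) ≤ 1 * 1 :=
          mul_le_mul h1 h2 (Real.exp_pos _).le zero_le_one
      _ ≤ (m ! : ℝ) + 1 := by linarith
  · have h1 : x ^ p ≤ x ^ (m : ℝ) := Real.rpow_le_rpow_of_exponent_le h.le hp
    rw [Real.rpow_natCast] at h1
    have hs : x ^ m / (m ! : ℝ) ≤ Real.exp x :=
      le_trans (Finset.single_le_sum (f := fun i => x ^ i / (i ! : ℝ))
        (fun i _ => by positivity) (Finset.self_mem_range_succ m))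
        (Real.sum_le_exp_of_nonneg hx (m + 1))
    have h2 : x ^ m ≤ (m ! : ℝ) * Real.exp x := by
      have hf : (0:ℝ) < (m ! : ℝ) := by exact_mod_cast m.factorial_pos
      rw [div_le_iff₀ hf] at hs
      linarith [hs]
    calc x ^ p * Real.exp (-x) ≤ x ^ m * Real.exp (-x) := by
          apply mul_le_mul_of_nonneg_right h1 (Real.exp_pos _).le
      _ ≤ ((m ! : ℝ) * Real.exp x) * Real.exp (-x) := by
          apply mul_le_mul_of_nonneg_right h2 (Real.exp_pos _).le
      _ = (m ! : ℝ) := by rw [mul_assoc, ← Real.exp_add]; simp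
      _ ≤ (m ! : ℝ) + 1 := by linarith

set_option maxHeartbeats 1000000 in
theorem stmt_1 (n : ℕ) (hn : 1 ≤ n) (s₀ : ℝ) (hs₀ : 0 < s₀) (α : ℝ)
    (hα : α ∈ Set.Ioo (-(π/2)) (π/2)) (η' : ℝ) (hη' : 0 < η') :
    (fun τ : ℝ =>
        τ * Real.exp (-τ/(2*s₀)) *
        ∫ r in Set.Ioo (0:ℝ) η',
          r ^ ((2*(n:ℝ)+1)/2) *
            ‖(((r : ℂ) - (s₀ : ℂ) * zbar α) ^ 2)⁻¹ *
              Complex.exp (Complex.I * (τ : ℂ) / ((r : ℂ) - (s₀ : ℂ) * zbar α))‖)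
      =O[atTop] fun τ : ℝ => τ ^ ((1 - 2*(n:ℝ))/4) := by
  obtain ⟨hα1, hα2⟩ := hα
  have hc : 0 < Real.cos α := Real.cos_pos_of_mem_Ioo ⟨hα1, hα2⟩
  have hpyth := Real.sin_sq_add_cos_sq α
  have hs1 : -1 < Real.sin α := by
    nlinarith [Real.neg_one_le_sin α, hc]
  set c : ℝ := Real.cos α with hcdef
  set b : ℝ := s₀ * (1 + Real.sin α) with hbdef
  have hb : 0 < b := by
    have : 0 < 1 + Real.sin α := by linarith
    exact mul_pos hs₀ this
  set p : ℝ := (2*(n:ℝ)+1)/2 with hpdef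
  have hp0 : 0 ≤ p := by positivity
  have hpn : p ≤ ((n+1 : ℕ) : ℝ) := by push_cast [hpdef]; linarith
  set M : ℝ := (η' + s₀*c)^2 + b^2 with hMdef
  have hM : 0 < M := by positivity
  set κ : ℝ := c / M with hκdef
  have hκ : 0 < κ := div_pos hc hM
  set N : ℝ → ℝ := fun r => (r + s₀*c)^2 + b^2 with hNdef
  have hre : ∀ r : ℝ, ((r:ℂ) - (s₀:ℂ) * zbar α).re = r + s₀ * c := by
    intro r; simp [zbar, -Complex.ofReal_cos, -Complex.ofReal_sin, hcdef]
  have him : ∀ r : ℝ, ((r:ℂ) - (s₀:ℂ) * zbar α).im = b := by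
    intro r
    simp only [zbar, hbdef, map_add, map_neg, Complex.conj_ofReal, map_mul, Complex.conj_I,
      Complex.sub_im, Complex.ofReal_im, Complex.mul_im, Complex.ofReal_re, Complex.add_im,
      Complex.neg_im, Complex.neg_re, Complex.mul_re, Complex.I_re, Complex.I_im]
    ring
  have hNS : ∀ r : ℝ, Complex.normSq ((r:ℂ) - (s₀:ℂ) * zbar α) = N r := by
    intro r
    rw [Complex.normSq_apply, hre, him]
    simp only [hNdef]
    ring
  have habs : ∀ (τ r : ℝ),
      ‖(((r : ℂ) - (s₀ : ℂ) * zbar α) ^ 2)⁻¹ *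
          Complex.exp (Complex.I * (τ : ℂ) / ((r : ℂ) - (s₀ : ℂ) * zbar α))‖
        = (N r)⁻¹ * Real.exp (τ * b / N r) := by
    intro τ r
    rw [norm_mul, norm_inv, norm_pow, Complex.norm_exp]
    congr 1
    · rw [Complex.sq_norm, hNS]
    · congr 1
      rw [Complex.div_re, hNS, hre, him]
      simp [Complex.mul_re, Complex.mul_im]
  rw [isBigO_iff]
  refine ⟨η' * (((n+1)! : ℝ) + 1) / b^2 * κ^(-p), ?_⟩
  filter_upwards [eventually_ge_atTop 1] with τ hτ
  have hτ0 : (0:ℝ) < τ := lt_of_lt_of_le one_pos hτ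
  have hκτ : 0 < κ * τ := mul_pos hκ hτ0
  set C : ℝ := (b^2)⁻¹ * Real.exp (τ/(2*s₀)) * (((n+1)! : ℝ) + 1) * (κ*τ)^(-p) with hCdef
  -- pointwise bound on the integrand
  have hint : ∀ r ∈ Set.Ioo (0:ℝ) η',
      ‖r ^ p * ‖(((r : ℂ) - (s₀ : ℂ) * zbar α) ^ 2)⁻¹ *
          Complex.exp (Complex.I * (τ : ℂ) / ((r : ℂ) - (s₀ : ℂ) * zbar α))‖‖ ≤ C := by
    intro r hr
    obtain ⟨hr0, hrη⟩ := hr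
    have hNr : 0 < N r := by simp only [hNdef]; positivity
    have hNM : N r ≤ M := by
      have h1 : 0 ≤ r + s₀*c := by positivity
      have h2 : (r + s₀*c)^2 ≤ (η' + s₀*c)^2 := by nlinarith
      simp only [hNdef, hMdef]; linarith
    rw [Real.norm_eq_abs, habs, abs_of_nonneg (by positivity)]
    have key : 2*s₀*b - N r = -(r^2 + 2*r*s₀*c) := by
      simp only [hNdef, hbdef]
      linear_combination (-(s₀^2)) * hpyth
    have hκN : κ * N r ≤ c := by
      rw [hκdef, div_mul_eq_mul_div, div_le_iff₀ hM]
      nlinarith [hc.le, hNM, hNr.le]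
    have hnum : 0 ≤ N r - 2*s₀*(κ*r)*N r - 2*s₀*b := by
      have hint1 : 2*s₀*r*(κ*N r) ≤ 2*s₀*r*c :=
        mul_le_mul_of_nonneg_left hκN (by positivity)
      nlinarith [key, sq_nonneg r]
    have e3 : b/N r ≤ 1/(2*s₀) - κ*r := by
      have h2 : 0 ≤ (N r - 2*s₀*(κ*r)*N r - 2*s₀*b)/(2*s₀*N r) :=
        div_nonneg hnum (by positivity)
      have h3 : (N r - 2*s₀*(κ*r)*N r - 2*s₀*b)/(2*s₀*N r)
          = 1/(2*s₀) - κ*r - b/N r := by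
        field_simp
      linarith [h3 ▸ h2]
    have hexp : τ * b / N r ≤ τ/(2*s₀) - κ*τ*r := by
      have h := mul_le_mul_of_nonneg_left e3 hτ0.le
      calc τ * b / N r = τ * (b / N r) := by ring
        _ ≤ τ * (1/(2*s₀) - κ*r) := h
        _ = τ/(2*s₀) - κ*τ*r := by ring
    have hrp : r ^ p = (κ*τ)^(-p) * (κ*τ*r) ^ p := by
      rw [Real.mul_rpow hκτ.le hr0.le, Real.rpow_neg hκτ.le]
      have hne : (κ*τ) ^ p ≠ 0 := (Real.rpow_pos_of_pos hκτ p).ne'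
      field_simp
    have haux := aux_rpow_exp (n+1) hp0 hpn (x := κ*τ*r) (by positivity)
    have hb2 : b^2 ≤ N r := by simp only [hNdef]; nlinarith [sq_nonneg (r + s₀*c)]
    calc r ^ p * ((N r)⁻¹ * Real.exp (τ * b / N r))
        ≤ r ^ p * ((b^2)⁻¹ * Real.exp (τ/(2*s₀) - κ*τ*r)) := by
          apply mul_le_mul_of_nonneg_left _ (Real.rpow_nonneg hr0.le p)
          exact mul_le_mul (inv_anti₀ (pow_pos hb 2) hb2)
            (Real.exp_le_exp.mpr hexp) (Real.exp_pos _).le (by positivity)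
      _ = (b^2)⁻¹ * Real.exp (τ/(2*s₀)) * ((κ*τ)^(-p) * ((κ*τ*r) ^ p * Real.exp (-(κ*τ*r)))) := by
          rw [show τ/(2*s₀) - κ*τ*r = τ/(2*s₀) + -(κ*τ*r) by ring, Real.exp_add, hrp]
          ring
      _ ≤ (b^2)⁻¹ * Real.exp (τ/(2*s₀)) * ((κ*τ)^(-p) * (((n+1)! : ℝ) + 1)) := by
          apply mul_le_mul_of_nonneg_left _ (by positivity)
          exact mul_le_mul_of_nonneg_left haux (Real.rpow_nonneg hκτ.le _)
      _ = C := by rw [hCdef]; ring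
  -- bound the integral
  have hvol : (volume (Set.Ioo (0:ℝ) η')).toReal = η' := by
    simp [Real.volume_Ioo, ENNReal.toReal_ofReal hη'.le]
  have hIb : ‖∫ r in Set.Ioo (0:ℝ) η',
      r ^ p * ‖(((r : ℂ) - (s₀ : ℂ) * zbar α) ^ 2)⁻¹ *
        Complex.exp (Complex.I * (τ : ℂ) / ((r : ℂ) - (s₀ : ℂ) * zbar α))‖‖ ≤ C * η' := by
    have h := norm_setIntegral_le_of_norm_le_const (μ := volume)
      (s := Set.Ioo (0:ℝ) η') (by rw [Real.volume_Ioo]; exact ENNReal.ofReal_lt_top)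
      hint
    rwa [measureReal_def, hvol] at h
  -- final estimate
  rw [Real.norm_eq_abs, Real.norm_eq_abs, abs_mul, abs_mul, abs_of_pos hτ0,
    abs_of_pos (Real.exp_pos _), abs_of_pos (Real.rpow_pos_of_pos hτ0 _)]
  rw [Real.norm_eq_abs] at hIb
  have h1 : τ * τ^(-p) = τ^(1-p) := by
    rw [show (1:ℝ) - p = 1 + (-p) by ring, Real.rpow_add hτ0, Real.rpow_one]
  have hle : (1:ℝ) - p ≤ (1 - 2*(n:ℝ))/4 := by
    have hn' : (1:ℝ) ≤ (n:ℝ) := by exact_mod_cast hn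
    rw [hpdef]; linarith
  calc τ * Real.exp (-τ/(2*s₀)) * |∫ r in Set.Ioo (0:ℝ) η',
        r ^ p * ‖(((r : ℂ) - (s₀ : ℂ) * zbar α) ^ 2)⁻¹ *
          Complex.exp (Complex.I * (τ : ℂ) / ((r : ℂ) - (s₀ : ℂ) * zbar α))‖|
      ≤ τ * Real.exp (-τ/(2*s₀)) * (C * η') := by
        apply mul_le_mul_of_nonneg_left hIb (by positivity)
    _ = η' * (((n+1)! : ℝ) + 1) / b^2 * κ^(-p) * (τ * τ^(-p)) *
          (Real.exp (-τ/(2*s₀)) * Real.exp (τ/(2*s₀))) := by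
        rw [hCdef, Real.mul_rpow hκ.le hτ0.le]
        ring
    _ = η' * (((n+1)! : ℝ) + 1) / b^2 * κ^(-p) * (τ * τ^(-p)) := by
        rw [← Real.exp_add, show -τ/(2*s₀) + τ/(2*s₀) = 0 by ring, Real.exp_zero, mul_one]
    _ = η' * (((n+1)! : ℝ) + 1) / b^2 * κ^(-p) * τ^(1-p) := by rw [h1]
    _ ≤ η' * (((n+1)! : ℝ) + 1) / b^2 * κ^(-p) * τ ^ ((1 - 2*(n:ℝ))/4) := by
        apply mul_le_mul_of_nonneg_left _ (by positivity)
        exact Real.rpow_le_rpow_of_exponent_le hτ hle
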